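/- arXiv:1203.5482 — 2 statements merged into one kernel-verified Lean document; each statement's English description precedes it below -/
import Mathlib

section
/- Let ã < 0 and 0 < α < 1 be real numbers. Then for every μ ≥ 0, (−ã)α² / ( [1 − (1−α)μ]² + (−ã)(1−α)(1−μ)² ) ≤ 1 − α − ã. Equivalently, writing the denominator as 1 + (−ã)(1−α) − 2(1−α)(1−ã)μ + (1−α)(1−α−ã)μ², the stated bound holds for all μ ≥ 0. -/
/-- The algebraic inequality `(−ã)α²/Ã ≤ 1 − α − ã` (inequality (3.5)):
for `ã < 0`, `0 < α < 1` and `μ ≥ 0`,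
`(−ã)α² / ([1 − (1−α)μ]² + (−ã)(1−α)(1−μ)²) ≤ 1 − α − ã`, together with the
identity rewriting the denominator as
`1 + (−ã)(1−α) − 2(1−α)(1−ã)μ + (1−α)(1−α−ã)μ²`. -/
theorem fast_diffusion_aux_inequality_one
    (a α μ : ℝ) (ha : a < 0) (hα₀ : 0 < α) (hα₁ : α < 1) (hμ : 0 ≤ μ) :
    (-a) * α ^ 2 /
        ((1 - (1 - α) * μ) ^ 2 + (-a) * (1 - α) * (1 - μ) ^ 2) ≤
      1 - α - a ∧
    (1 - (1 - α) * μ) ^ 2 + (-a) * (1 - α) * (1 - μ) ^ 2 =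
      1 + (-a) * (1 - α) - 2 * (1 - α) * (1 - a) * μ +
        (1 - α) * (1 - α - a) * μ ^ 2 := by
  constructor
  · have hD : 0 < (1 - (1 - α) * μ) ^ 2 + (-a) * (1 - α) * (1 - μ) ^ 2 := by
      nlinarith [sq_nonneg (1 - (1 - α) * μ), sq_nonneg (1 - μ),
        sq_nonneg ((1 - α - a) * μ - (1 - a)), mul_pos (neg_pos.mpr ha) (mul_pos hα₀ hα₀)]
    rw [div_le_iff₀ hD]
    nlinarith [sq_nonneg ((1 - α - a) * μ - (1 - a)), sq_nonneg μ]
  · ring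
end

section
/- Let ã < 0 and 0 < α < 1 be real numbers. Then for every μ ≥ 0, 2(−ã)α²μ / ( 1 + (−ã)(1−α) − 2(1−α)(1−ã)μ + (1−α)(1−α−ã)μ² ) ≤ √( (1/(1−α) + (−ã)) (1−α−ã) ) + (1−ã) ≤ α²/(2(1−α)) + 2(1−ã). -/
/-!
With `c = 1 - α` the radicand equals `(1 - a)² + (-a) α² / c`, so its square root `s` satisfies
`(s + (1 - a)) (s - (1 - a)) = (-a) α² / c`. This factors the numerator as
`(s + (1 - a)) · 2cμ (s - (1 - a))`, and the first bound reduces to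
`2 (c s) μ ≤ (1 + (-a) c) + c (c - a) μ²`, which is AM-GM because `(c s)²` is the product of the two
coefficients. The second bound is `√(p² + q) ≤ p + r` for `q ≤ 2pr`.
-/

lemma two_mul_mul_le_add_mul_sq {P R t : ℝ} (hP : 0 < P) (ht : t ^ 2 ≤ P * R) (μ : ℝ) :
    2 * t * μ ≤ P + R * μ ^ 2 := by
  have hP_mul : 0 ≤ P * (P + R * μ ^ 2 - 2 * t * μ) := by
    nlinarith [sq_nonneg (P - t * μ), mul_nonneg (sub_nonneg.2 ht) (sq_nonneg μ)]
  nlinarith [nonneg_of_mul_nonneg_right hP_mul hP]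

lemma sqrt_sq_add_le_add {p q r : ℝ} (hp : 0 ≤ p) (hr : 0 ≤ r) (hq : q ≤ 2 * p * r) :
    √(p ^ 2 + q) ≤ p + r :=
  Real.sqrt_le_iff.2 ⟨by positivity, by nlinarith [sq_nonneg r]⟩

namespace FastDiffusion

variable {a α : ℝ}

lemma radicand_eq (hα : α < 1) :
    (1 / (1 - α) + (-a)) * (1 - α - a) = (1 - a) ^ 2 + (-a) * α ^ 2 / (1 - α) := by
  have : 1 - α ≠ 0 := by linarith
  field_simp
  ring

lemma radicand_nonneg (ha : a ≤ 0) (hα : α < 1) : 0 ≤ (1 / (1 - α) + (-a)) * (1 - α - a) := by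
  have : 0 < 1 / (1 - α) := one_div_pos.2 (by linarith)
  exact mul_nonneg (by linarith) (by linarith)

lemma denominator_eq (μ : ℝ) :
    1 + (-a) * (1 - α) - 2 * (1 - α) * (1 - a) * μ + (1 - α) * (1 - α - a) * μ ^ 2 =
      (1 - (1 - α) * μ) ^ 2 + (-a) * (1 - α) * (1 - μ) ^ 2 := by
  ring

lemma denominator_nonneg (ha : a ≤ 0) (hα : α < 1) (μ : ℝ) :
    0 ≤ 1 + (-a) * (1 - α) - 2 * (1 - α) * (1 - a) * μ + (1 - α) * (1 - α - a) * μ ^ 2 := by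
  rw [denominator_eq]
  have : 0 ≤ (-a) * (1 - α) := mul_nonneg (by linarith) (by linarith)
  positivity

lemma div_denominator_le (ha : a ≤ 0) (hα : α < 1) (μ : ℝ) :
    2 * (-a) * α ^ 2 * μ /
        (1 + (-a) * (1 - α) - 2 * (1 - α) * (1 - a) * μ + (1 - α) * (1 - α - a) * μ ^ 2) ≤
      √((1 / (1 - α) + (-a)) * (1 - α - a)) + (1 - a) := by
  set c := 1 - α with hc_def
  set s := √((1 / c + (-a)) * (1 - α - a))
  have hc : 0 < c := by linarith
  have hs_add : 0 ≤ s + (1 - a) := by linarith [Real.sqrt_nonneg ((1 / c + (-a)) * (1 - α - a))]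
  have hs_sq : s ^ 2 = (1 / c + (-a)) * (1 - α - a) := Real.sq_sqrt (radicand_nonneg ha hα)
  have hcs_sq : (c * s) ^ 2 = (1 + (-a) * c) * (c * (1 - α - a)) := by
    rw [mul_pow, hs_sq]
    field_simp
  have hquad : 2 * (c * s) * μ ≤ (1 + (-a) * c) + c * (1 - α - a) * μ ^ 2 :=
    two_mul_mul_le_add_mul_sq (by nlinarith) hcs_sq.le μ
  have hnum : 2 * (-a) * α ^ 2 * μ = (s + (1 - a)) * (2 * c * μ * (s - (1 - a))) := by
    have hdiff : (s + (1 - a)) * (s - (1 - a)) = (-a) * α ^ 2 / c := by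
      rw [← sq_sub_sq, hs_sq, hc_def, radicand_eq hα]
      ring
    rw [show (s + (1 - a)) * (2 * c * μ * (s - (1 - a))) =
      2 * c * μ * ((s + (1 - a)) * (s - (1 - a))) by ring, hdiff]
    field_simp
  refine div_le_of_le_mul₀ (denominator_nonneg ha hα μ) hs_add ?_
  rw [hnum]
  exact mul_le_mul_of_nonneg_left (by linarith) hs_add

lemma sqrt_radicand_add_le (ha : a ≤ 0) (hα : α < 1) :
    √((1 / (1 - α) + (-a)) * (1 - α - a)) + (1 - a) ≤ α ^ 2 / (2 * (1 - α)) + 2 * (1 - a) := by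
  have hc : 0 < 1 - α := by linarith
  have hq : (-a) * α ^ 2 / (1 - α) ≤ 2 * (1 - a) * (α ^ 2 / (2 * (1 - α))) := by
    rw [show 2 * (1 - a) * (α ^ 2 / (2 * (1 - α))) = (1 - a) * α ^ 2 / (1 - α) by
      field_simp]
    gcongr
    linarith
  have := sqrt_sq_add_le_add (by linarith) (by positivity) hq
  rw [radicand_eq hα]
  linarith

end FastDiffusion

open FastDiffusion in
theorem fast_diffusion_aux_inequality_two_general
    (a α μ : ℝ) (ha : a < 0) (hα₁ : α < 1) :
    2 * (-a) * α ^ 2 * μ /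
        (1 + (-a) * (1 - α) - 2 * (1 - α) * (1 - a) * μ +
          (1 - α) * (1 - α - a) * μ ^ 2) ≤
      Real.sqrt ((1 / (1 - α) + (-a)) * (1 - α - a)) + (1 - a) ∧
    Real.sqrt ((1 / (1 - α) + (-a)) * (1 - α - a)) + (1 - a) ≤
      α ^ 2 / (2 * (1 - α)) + 2 * (1 - a) :=
  ⟨div_denominator_le ha.le hα₁ μ, sqrt_radicand_add_le ha.le hα₁⟩

/-- The algebraic inequality `2μ/Ã ≤ α²/(2(1−α)) + 2(1−ã)` (inequality (3.6)):
for `ã < 0`, `0 < α < 1` and `μ ≥ 0`,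
`2(−ã)α²μ / (1 + (−ã)(1−α) − 2(1−α)(1−ã)μ + (1−α)(1−α−ã)μ²)
  ≤ √((1/(1−α) + (−ã))(1−α−ã)) + (1−ã) ≤ α²/(2(1−α)) + 2(1−ã)`. -/
theorem fast_diffusion_aux_inequality_two
    (a α μ : ℝ) (ha : a < 0) (hα₀ : 0 < α) (hα₁ : α < 1) (hμ : 0 ≤ μ) :
    2 * (-a) * α ^ 2 * μ /
        (1 + (-a) * (1 - α) - 2 * (1 - α) * (1 - a) * μ +
          (1 - α) * (1 - α - a) * μ ^ 2) ≤
      Real.sqrt ((1 / (1 - α) + (-a)) * (1 - α - a)) + (1 - a) ∧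
    Real.sqrt ((1 / (1 - α) + (-a)) * (1 - α - a)) + (1 - a) ≤
      α ^ 2 / (2 * (1 - α)) + 2 * (1 - a) :=
  fast_diffusion_aux_inequality_two_general a α μ ha hα₁
end
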